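/- The combinatorial Springer map for type B is well defined and lands in X_B^{*2}: let m ≥ 0, let λ be a partition of 2n − 2m in which every part has even multiplicity, and let χ : ℕ → ℕ satisfy m ≥ λ_i − χ(λ_i) ≥ λ_{i+1} − χ(λ_{i+1}), λ_i/2 ≤ χ(λ_i) ≤ λ_i, and χ(λ_i) ≥ χ(λ_{i+1}) for all i ≥ 1. Define μ_1 = m, μ_{i+1} = λ_{2i−1} − χ(λ_{2i−1}), and ν_i = χ(λ_{2i−1}) for i ≥ 1. Then μ and ν are partitions, |μ| + |ν| = n, and ν_i ≥ μ_{i+1} for all i. -/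

import Mathlib

/-!
Even multiplicities pair the parts of `λ` as `λ_{2i-1} = λ_{2i}`: otherwise the parts that are
`≥ λ_{2i-1} > λ_{2i}` would be exactly `λ_1, …, λ_{2i-1}`, an odd number of them, although their
number is a sum of even multiplicities. Hence `|λ| = 2 ∑ λ_{2i-1}`, and
`|μ| + |ν| = m + ∑ λ_{2i-1} = n`. Every other claim is a termwise consequence of the conditions
on `χ`.
-/

open Finset

/-- A partition: weakly decreasing, finitely supported sequence of naturals (0-indexed). -/
def IsPartition (μ : ℕ → ℕ) : Prop :=
  Antitone μ ∧ ∃ N, ∀ i, N ≤ i → μ i = 0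

/-- Membership in `P_2(n)`: a pair of partitions of total size `n`. -/
def PairP2 (n : ℕ) (p : (ℕ → ℕ) × (ℕ → ℕ)) : Prop :=
  IsPartition p.1 ∧ IsPartition p.2 ∧
    ∃ N, (∀ i, N ≤ i → p.1 i = 0 ∧ p.2 i = 0) ∧
      (∑ i ∈ range N, (p.1 i + p.2 i)) = n

/-- The dominance-type order on pairs of partitions (0-indexed: `p.1 0` is `μ_1`). -/
def PairLE (p q : (ℕ → ℕ) × (ℕ → ℕ)) : Prop :=
  (∀ j, ∑ i ∈ range j, (p.1 i + p.2 i) ≤ ∑ i ∈ range j, (q.1 i + q.2 i)) ∧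
  (∀ j, (∑ i ∈ range j, (p.1 i + p.2 i)) + p.1 j ≤
        (∑ i ∈ range j, (q.1 i + q.2 i)) + q.1 j)

theorem even_card_filter_le_of_even_card_filter_eq {α : Type*} (s : Finset α) (f : α → ℕ)
    (hmult : ∀ j, 0 < j → Even #{a ∈ s | f a = j}) {v : ℕ} (hv : 0 < v) :
    Even #{a ∈ s | v ≤ f a} := by
  classical
  rw [card_eq_sum_card_image f]
  refine even_sum _ fun j hj => ?_
  obtain ⟨a, ha, rfl⟩ := mem_image.mp hj
  have hva : v ≤ f a := (mem_filter.mp ha).2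
  have hfiber : {x ∈ {x ∈ s | v ≤ f x} | f x = f a} = {x ∈ s | f x = f a} := by
    ext x
    simp only [mem_filter]
    constructor
    · exact fun h => ⟨h.1.1, h.2⟩
    · exact fun h => ⟨⟨h.1, h.2 ▸ hva⟩, h.2⟩
  exact hfiber ▸ hmult (f a) (by omega)

theorem apply_two_mul_add_one_eq_of_even_mult {N : ℕ} {l : ℕ → ℕ} (hanti : Antitone l)
    (hN : ∀ i, N ≤ i → l i = 0) (hmult : ∀ j, 0 < j → Even #{i ∈ range N | l i = j}) (i : ℕ) :
    l (2 * i + 1) = l (2 * i) := by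
  have hle : l (2 * i + 1) ≤ l (2 * i) := hanti (by omega)
  by_contra hne
  have hpos : 0 < l (2 * i) := by omega
  have hlt : 2 * i < N := by
    by_contra h
    exact hpos.ne' (hN _ (by omega))
  have hblock : {k ∈ range N | l (2 * i) ≤ l k} = range (2 * i + 1) := by
    ext k
    simp only [mem_filter, mem_range]
    constructor
    · rintro ⟨-, hk⟩
      by_contra h
      have := hanti (show 2 * i + 1 ≤ k by omega)
      omega
    · intro hk
      exact ⟨by omega, hanti (by omega)⟩
  have heven := even_card_filter_le_of_even_card_filter_eq _ l hmult hpos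
  rw [hblock, card_range] at heven
  exact Nat.not_even_two_mul_add_one i heven

theorem sum_range_two_mul {M : Type*} [AddCommMonoid M] (f : ℕ → M) (N : ℕ) :
    ∑ i ∈ range (2 * N), f i = ∑ i ∈ range N, (f (2 * i) + f (2 * i + 1)) := by
  induction N with
  | zero => simp
  | succ N ih =>
    rw [show 2 * (N + 1) = 2 * N + 1 + 1 by omega, sum_range_succ, sum_range_succ, ih,
      sum_range_succ, add_assoc]

theorem two_mul_sum_range_apply_two_mul {N : ℕ} {l : ℕ → ℕ} (hN : ∀ i, N ≤ i → l i = 0)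
    (hpair : ∀ i, l (2 * i + 1) = l (2 * i)) :
    2 * ∑ i ∈ range N, l (2 * i) = ∑ i ∈ range N, l i := by
  have htail : ∑ i ∈ range N, l i = ∑ i ∈ range (2 * N), l i :=
    sum_subset (range_subset_range.mpr (by omega)) fun i _ hi => hN i (by simpa using hi)
  rw [htail, sum_range_two_mul, mul_sum]
  exact sum_congr rfl fun i _ => by rw [hpair]; ring

theorem antitone_of_antitone_succ {α : Type*} [Preorder α] {g : ℕ → α} (hsucc : Antitone fun j => g (j + 1))
    (h0 : g 1 ≤ g 0) : Antitone g := by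
  refine antitone_nat_of_succ_le fun j => ?_
  cases j with
  | zero => exact h0
  | succ j => exact hsucc j.le_succ

theorem Antitone.comp_two_mul {α : Type*} [Preorder α] {f : ℕ → α} (hf : Antitone f) :
    Antitone fun i => f (2 * i) :=
  hf.comp_monotone fun _ _ h => by omega

/-- `l` is `λ`, 0-indexed; `μ = (m, λ_1 - χ(λ_1), λ_3 - χ(λ_3), …)`, `ν = (χ(λ_1), χ(λ_3), …)`. -/
theorem springer_typeB (n m N : ℕ) (l χ : ℕ → ℕ)
    (hanti : Antitone l) (hN : ∀ i, N ≤ i → l i = 0)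
    (hsum : (∑ i ∈ range N, l i) + 2 * m = 2 * n)
    (hmult : ∀ j, 0 < j → Even (((range N).filter fun i => l i = j).card))
    (hm : ∀ i, l i - χ (l i) ≤ m)
    (hχ1 : ∀ i, l i ≤ 2 * χ (l i))
    (hχ2 : ∀ i, χ (l i) ≤ l i)
    (hχ3 : ∀ i, χ (l (i + 1)) ≤ χ (l i))
    (hχ4 : ∀ i, l (i + 1) - χ (l (i + 1)) ≤ l i - χ (l i)) :
    Antitone (fun i => match i with
      | 0 => m
      | j + 1 => l (2 * j) - χ (l (2 * j))) ∧
    Antitone (fun i => χ (l (2 * i))) ∧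
    (∀ i, N + 1 ≤ i → (l (2 * (i - 1)) - χ (l (2 * (i - 1)))) = 0) ∧
    (∀ i, N ≤ i → χ (l (2 * i)) = 0) ∧
    (m + ∑ i ∈ range N, ((l (2 * i) - χ (l (2 * i))) + χ (l (2 * i)))) = n ∧
    (∀ i, l (2 * i) - χ (l (2 * i)) ≤ χ (l (2 * i))) := by
  have hsplit : ∀ i, l i - χ (l i) + χ (l i) = l i := fun i => Nat.sub_add_cancel (hχ2 i)
  have hhalf : 2 * ∑ i ∈ range N, l (2 * i) = ∑ i ∈ range N, l i :=
    two_mul_sum_range_apply_two_mul hN (apply_two_mul_add_one_eq_of_even_mult hanti hN hmult)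
  refine ⟨antitone_of_antitone_succ
      (antitone_nat_of_succ_le (f := fun i => l i - χ (l i)) hχ4).comp_two_mul (hm 0),
    (antitone_nat_of_succ_le (f := fun i => χ (l i)) hχ3).comp_two_mul,
    fun i hi => ?_, fun i hi => ?_, ?_, fun i => by have := hχ1 (2 * i); omega⟩
  · simp [hN (2 * (i - 1)) (by omega)]
  · simpa [hN (2 * i) (by omega)] using hχ2 (2 * i)
  · simp only [hsplit]
    omega
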